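/- Let Ω ⊂ ℝⁿ be a bounded domain, ε > 0, α ≥ 0, β > 0 with α + β = 1. Suppose u and u' satisfy the dynamic programming principle on Ω_ε with boundary values g and g' on Γ_ε (comparison with the boundary data). Then sup_{x ∈ Ω} |u' − u|(x) ≤ sup_{x ∈ Γ_ε} |g' − g|(x). In particular, a solution to the DPP with given bounded Borel boundary data is unique. -/

import Mathlib

/-! Let `v = u' - u` and `M = sup v` over `Ω ∪ Γ_ε`. Subtracting the two DPPs and comparing the
sup and inf terms gives `v x ≤ α M + β ⨍_{B_ε(x)} v`, so if `v x > M - δ` then `M - v` averages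
less than `δ / β` over `B_ε(x)`. The ball `B_{ε/4}(x + (ε/2) e)` carries a `4⁻ⁿ` share of the
measure of `B_ε(x)`, so `M - v < 4ⁿ δ / β` at some point of it, which lies at least `ε / 4`
further in the fixed direction `e`. If `M` exceeded `sup_Γ v`, start at a point where `M - v` is
tiny and iterate: while `M - v` stays below `M - sup_Γ v` the points stay in `Ω`, so the step can
be repeated, and after boundedly many steps the points would have left the bounded set `Ω ∪ Γ_ε`. -/

open MeasureTheory Metric Set

def bdryStrip {n : ℕ} (Ω : Set (EuclideanSpace ℝ (Fin n))) (ε : ℝ) :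
    Set (EuclideanSpace ℝ (Fin n)) :=
  {x | x ∉ Ω ∧ Metric.infDist x Ω ≤ ε}

open Module
open scoped RealInnerProductSpace

section SupInf

variable {X : Type*} {B : Set X} {f g : X → ℝ} {M : ℝ}

lemma csSup_image_le_csSup_image_add (hB : B.Nonempty) (hf : BddAbove (f '' B))
    (h : ∀ y ∈ B, g y - f y ≤ M) : sSup (g '' B) ≤ sSup (f '' B) + M := by
  refine csSup_le (hB.image g) ?_
  rintro _ ⟨y, hy, rfl⟩
  linarith [h y hy, le_csSup hf (mem_image_of_mem f hy)]

lemma csInf_image_le_csInf_image_add (hB : B.Nonempty) (hg : BddBelow (g '' B))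
    (h : ∀ y ∈ B, g y - f y ≤ M) : sInf (g '' B) ≤ sInf (f '' B) + M := by
  suffices sInf (g '' B) - M ≤ sInf (f '' B) by linarith
  refine le_csInf (hB.image f) ?_
  rintro _ ⟨y, hy, rfl⟩
  linarith [h y hy, csInf_le hg (mem_image_of_mem g hy)]

lemma bddAbove_image_of_abs_le {C : ℝ} (h : ∀ x, |f x| ≤ C) : BddAbove (f '' B) :=
  ⟨C, by rintro _ ⟨x, -, rfl⟩; exact (le_abs_self _).trans (h x)⟩

lemma bddBelow_image_of_abs_le {C : ℝ} (h : ∀ x, |f x| ≤ C) : BddBelow (f '' B) :=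
  ⟨-C, by rintro _ ⟨x, -, rfl⟩; exact neg_le_of_abs_le (h x)⟩

end SupInf

lemma exists_pos_le_of_forall_exists_step {X : Type*} {S : Set X} {w h : X → ℝ} {C d s R : ℝ}
    (hC : 1 ≤ C) (hd : 0 < d) (hs : 0 < s) (hR : ∀ x ∈ S, ∀ y ∈ S, h y - h x ≤ R)
    (hstep : ∀ x ∈ S, ∀ δ ≤ d, w x < δ → ∃ z ∈ S, w z < C * δ ∧ h x + s ≤ h z) :
    ∃ η > 0, ∀ x ∈ S, η ≤ w x := by
  obtain ⟨N, hN⟩ := exists_nat_gt (R / s)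
  have hCN : 0 < C ^ N := pow_pos (zero_lt_one.trans_le hC) N
  refine ⟨d / C ^ N, div_pos hd hCN, fun x₀ hx₀ => ?_⟩
  by_contra! hwx₀
  have hmarch : ∀ k ≤ N, ∃ y ∈ S, w y < C ^ k * (d / C ^ N) ∧ h x₀ + k * s ≤ h y := by
    intro k
    induction k with
    | zero => exact fun _ => ⟨x₀, hx₀, by simpa using hwx₀, by simp⟩
    | succ k ih =>
      intro hk
      obtain ⟨y, hy, hwy, hhy⟩ := ih (by omega)
      have hδ : C ^ k * (d / C ^ N) ≤ d := by
        rw [mul_div_assoc', div_le_iff₀ hCN, mul_comm d]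
        exact mul_le_mul_of_nonneg_right (pow_le_pow_right₀ hC (by omega)) hd.le
      obtain ⟨z, hz, hwz, hhz⟩ := hstep y hy _ hδ hwy
      refine ⟨z, hz, by rwa [pow_succ', mul_assoc], ?_⟩
      push_cast
      linarith
  obtain ⟨y, hy, -, hhy⟩ := hmarch N le_rfl
  linarith [hR x₀ hx₀ y hy, (div_lt_iff₀ hs).1 hN]

section Average

variable {X : Type*} [MeasurableSpace X] {μ : Measure X} {A B : Set X} {f g : X → ℝ}

lemma setAverage_sub (hf : IntegrableOn f B μ) (hg : IntegrableOn g B μ) :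
    ⨍ x in B, f x - g x ∂μ = (⨍ x in B, f x ∂μ) - ⨍ x in B, g x ∂μ := by
  simp only [setAverage_eq, integral_sub hf hg, smul_sub]

lemma exists_le_measureReal_div_mul_setAverage (hAB : A ⊆ B) (hA : μ A ≠ 0) (hB : μ B ≠ ⊤)
    (hBm : MeasurableSet B) (hf : IntegrableOn f B μ) (hf₀ : ∀ y ∈ B, 0 ≤ f y) :
    ∃ z ∈ A, f z ≤ μ.real B / μ.real A * ⨍ y in B, f y ∂μ := by
  have hA' : μ A ≠ ⊤ := ne_top_of_le_ne_top hB (measure_mono hAB)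
  obtain ⟨z, hzA, hz⟩ := exists_le_setAverage hA hA' (hf.mono_set hAB)
  refine ⟨z, hzA, hz.trans ?_⟩
  rw [setAverage_eq, smul_eq_mul, div_mul_eq_mul_div, ← smul_eq_mul (μ.real B),
    measure_smul_setAverage f hB, inv_mul_eq_div]
  gcongr
  exact ae_restrict_of_forall_mem hBm hf₀

end Average

lemma addHaar_real_ball_mul_div {E : Type*} [NormedAddCommGroup E] [NormedSpace ℝ E]
    [FiniteDimensional ℝ E] [MeasurableSpace E] [BorelSpace E] (μ : Measure E)
    [μ.IsAddHaarMeasure] (x y : E) {r s : ℝ} (hr : 0 < r) (hs : 0 < s) :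
    μ.real (ball x (s * r)) / μ.real (ball y r) = s ^ finrank ℝ E := by
  have hpos : 0 < μ.real (ball y r) :=
    ENNReal.toReal_pos (measure_ball_pos μ y hr).ne' measure_ball_lt_top.ne
  rw [measureReal_def, Measure.addHaar_ball_mul_of_pos μ x hs, ENNReal.toReal_mul,
    ENNReal.toReal_ofReal (by positivity), ← measureReal_def,
    ← Measure.addHaar_real_ball_center μ y, mul_div_assoc, div_self hpos.ne', mul_one]

lemma integrableOn_ball_of_abs_le {X : Type*} [PseudoMetricSpace X] [ProperSpace X]
    [MeasurableSpace X] {μ : Measure X} [IsFiniteMeasureOnCompacts μ] {u : X → ℝ} {C : ℝ}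
    (hum : Measurable u) (hub : ∀ y, |u y| ≤ C) (x : X) (r : ℝ) :
    IntegrableOn u (ball x r) μ :=
  Measure.integrableOn_of_bounded measure_ball_lt_top.ne hum.aestronglyMeasurable
    (ae_of_all _ hub)

def SatisfiesDPP {E : Type*} [PseudoMetricSpace E] [MeasurableSpace E] (μ : Measure E)
    (Ω : Set E) (ε α β : ℝ) (u : E → ℝ) : Prop :=
  ∀ x ∈ Ω, u x = α / 2 * sSup (u '' ball x ε) + α / 2 * sInf (u '' ball x ε) +
    β * ⨍ y in ball x ε, u y ∂μ

namespace SatisfiesDPP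

section

variable {X : Type*} [PseudoMetricSpace X] [ProperSpace X] [MeasurableSpace X] {μ : Measure X}
  [IsFiniteMeasureOnCompacts μ] {Ω : Set X} {ε α β Cu Cu' M : ℝ} {u u' : X → ℝ} {x : X}

lemma sub_le_add_setAverage (hu : SatisfiesDPP μ Ω ε α β u) (hu' : SatisfiesDPP μ Ω ε α β u')
    (hα : 0 ≤ α) (hε : 0 < ε) (hum : Measurable u) (hub : ∀ y, |u y| ≤ Cu)
    (hu'm : Measurable u') (hu'b : ∀ y, |u' y| ≤ Cu') (hx : x ∈ Ω)
    (hM : ∀ y ∈ ball x ε, u' y - u y ≤ M) :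
    u' x - u x ≤ α * M + β * ⨍ y in ball x ε, u' y - u y ∂μ := by
  have hne : (ball x ε).Nonempty := nonempty_ball.2 hε
  have hsup := csSup_image_le_csSup_image_add hne (bddAbove_image_of_abs_le hub) hM
  have hinf := csInf_image_le_csInf_image_add hne (bddBelow_image_of_abs_le hu'b) hM
  rw [setAverage_sub (integrableOn_ball_of_abs_le hu'm hu'b x ε)
    (integrableOn_ball_of_abs_le hum hub x ε), hu x hx, hu' x hx]
  nlinarith

end

variable {E : Type*} [NormedAddCommGroup E] [InnerProductSpace ℝ E] [FiniteDimensional ℝ E]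
  [MeasurableSpace E] [BorelSpace E] {μ : Measure E} [μ.IsAddHaarMeasure]
  {Ω : Set E} {ε α β Cu Cu' M : ℝ} {u u' : E → ℝ} {x : E}

lemma exists_mem_ball_sub_lt (hu : SatisfiesDPP μ Ω ε α β u) (hu' : SatisfiesDPP μ Ω ε α β u')
    (hα : 0 ≤ α) (hβ : 0 < β) (hαβ : α + β = 1) (hε : 0 < ε) (hum : Measurable u)
    (hub : ∀ y, |u y| ≤ Cu) (hu'm : Measurable u') (hu'b : ∀ y, |u' y| ≤ Cu') {e : E}
    (he : ‖e‖ = 1) (hx : x ∈ Ω) (hM : ∀ y ∈ ball x ε, u' y - u y ≤ M) {δ : ℝ}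
    (hδ : M - (u' x - u x) < δ) :
    ∃ z ∈ ball x ε, M - (u' z - u z) < 4 ^ finrank ℝ E / β * δ ∧ ⟪x, e⟫ + ε / 4 ≤ ⟪z, e⟫ := by
  set c := x + (ε / 2) • e
  have hcx : dist c x = ε / 2 := by
    simp [c, dist_eq_norm, norm_smul, he, abs_of_pos hε]
  have hcap : ball c (ε / 4) ⊆ ball x ε := ball_subset_ball' (by rw [hcx]; linarith)
  have hvi : IntegrableOn (fun y => u' y - u y) (ball x ε) μ :=
    (integrableOn_ball_of_abs_le hu'm hu'b x ε).sub (integrableOn_ball_of_abs_le hum hub x ε)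
  have hwi : IntegrableOn (fun y => M - (u' y - u y)) (ball x ε) μ :=
    (integrableOn_const measure_ball_lt_top.ne).sub hvi
  have havg : ⨍ y in ball x ε, M - (u' y - u y) ∂μ < δ / β := by
    rw [setAverage_sub (integrableOn_const measure_ball_lt_top.ne) hvi,
      setAverage_const (measure_ball_pos μ x hε).ne' measure_ball_lt_top.ne, lt_div_iff₀ hβ]
    have hsub := hu.sub_le_add_setAverage hu' hα hε hum hub hu'm hu'b hx hM
    have hM' : α * M + β * M = M := by rw [← add_mul, hαβ, one_mul]
    linarith
  obtain ⟨z, hz, hwz⟩ := exists_le_measureReal_div_mul_setAverage hcap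
    (measure_ball_pos μ c (by positivity)).ne' measure_ball_lt_top.ne measurableSet_ball hwi
    fun y hy => sub_nonneg.2 (hM y hy)
  have hratio : μ.real (ball x ε) / μ.real (ball c (ε / 4)) = 4 ^ finrank ℝ E := by
    have := addHaar_real_ball_mul_div μ x c (by positivity : 0 < ε / 4) four_pos
    rwa [mul_div_cancel₀ _ four_ne_zero] at this
  refine ⟨z, hcap hz, ?_, ?_⟩
  · calc M - (u' z - u z) ≤ 4 ^ finrank ℝ E * ⨍ y in ball x ε, M - (u' y - u y) ∂μ :=
          hratio ▸ hwz
      _ < 4 ^ finrank ℝ E * (δ / β) := by gcongr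
      _ = 4 ^ finrank ℝ E / β * δ := by ring
  · have hce : ⟪c, e⟫ = ⟪x, e⟫ + ε / 2 := by
      simp [c, inner_add_left, real_inner_smul_left, he]
    have hcz : ⟪c - z, e⟫ ≤ ‖c - z‖ * ‖e‖ := real_inner_le_norm _ _
    rw [inner_sub_left, he, mul_one, ← dist_eq_norm, dist_comm] at hcz
    linarith [mem_ball.1 hz]

theorem sub_le_of_forall_sub_le [Nontrivial E] {Γ : Set E} {K : ℝ}
    (hu : SatisfiesDPP μ Ω ε α β u) (hu' : SatisfiesDPP μ Ω ε α β u')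
    (hα : 0 ≤ α) (hβ : 0 < β) (hαβ : α + β = 1) (hε : 0 < ε) (hum : Measurable u)
    (hub : ∀ y, |u y| ≤ Cu) (hu'm : Measurable u') (hu'b : ∀ y, |u' y| ≤ Cu')
    (hball : ∀ x ∈ Ω, ball x ε ⊆ Ω ∪ Γ) (hbdd : Bornology.IsBounded (Ω ∪ Γ))
    (hΓ : ∀ y ∈ Γ, u' y - u y ≤ K) (hx : x ∈ Ω) :
    u' x - u x ≤ K := by
  obtain ⟨e, he⟩ := exists_norm_eq E zero_le_one
  set S := Ω ∪ Γ
  set v := fun y => u' y - u y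
  have hvS : BddAbove (v '' S) :=
    ⟨Cu' + Cu, by
      rintro _ ⟨y, -, rfl⟩
      exact (le_abs_self _).trans ((abs_sub _ _).trans (add_le_add (hu'b y) (hub y)))⟩
  set M := sSup (v '' S)
  have hvM : ∀ y ∈ S, v y ≤ M := fun y hy => le_csSup hvS (mem_image_of_mem v hy)
  by_contra! hKx
  have hKM : K < M := hKx.trans_le (hvM x (Or.inl hx))
  have hC : 1 ≤ 4 ^ finrank ℝ E / β := by
    rw [le_div_iff₀ hβ, one_mul]
    exact (by linarith : β ≤ 1).trans (one_le_pow₀ (by norm_num))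
  have hR : ∀ x ∈ S, ∀ y ∈ S, ⟪y, e⟫ - ⟪x, e⟫ ≤ diam S := fun x hx y hy => by
    rw [← inner_sub_left]
    exact (real_inner_le_norm _ _).trans_eq (by rw [he, mul_one, ← dist_eq_norm])
      |>.trans (dist_le_diam_of_mem hbdd hy hx)
  obtain ⟨η, hη, hηS⟩ := exists_pos_le_of_forall_exists_step (w := fun y => M - v y)
    (h := fun y => ⟪y, e⟫) hC (sub_pos.2 hKM) (by positivity : 0 < ε / 4) hR
    fun y hy δ hδ hwy => by
      have hyΩ : y ∈ Ω := hy.resolve_right fun hyΓ => by linarith [hΓ y hyΓ]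
      obtain ⟨z, hz, hwz, hez⟩ := hu.exists_mem_ball_sub_lt hu' hα hβ hαβ hε hum hub hu'm hu'b
        he hyΩ (fun z hz => hvM z (hball y hyΩ hz)) hwy
      exact ⟨z, hball y hyΩ hz, hwz, hez⟩
  obtain ⟨_, ⟨y, hy, rfl⟩, hlt⟩ :=
    exists_lt_of_lt_csSup (Set.Nonempty.image v ⟨x, Or.inl hx⟩) (sub_lt_self M hη)
  linarith [hηS y hy]

end SatisfiesDPP

lemma ball_subset_union_bdryStrip {n : ℕ} {Ω : Set (EuclideanSpace ℝ (Fin n))} {ε : ℝ} {x}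
    (hx : x ∈ Ω) : ball x ε ⊆ Ω ∪ bdryStrip Ω ε := fun _ hy =>
  or_iff_not_imp_left.2 fun hyΩ => ⟨hyΩ, (infDist_le_dist_of_mem hx).trans (mem_ball.1 hy).le⟩

lemma isBounded_union_bdryStrip {n : ℕ} {Ω : Set (EuclideanSpace ℝ (Fin n))} (ε : ℝ)
    (hΩ : Bornology.IsBounded Ω) (hne : Ω.Nonempty) :
    Bornology.IsBounded (Ω ∪ bdryStrip Ω ε) :=
  hΩ.union <| hΩ.thickening (δ := ε + 1) |>.subset fun _ hy =>
    (mem_thickening_iff_infDist_lt hne).2 (hy.2.trans_lt (lt_add_one ε))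

theorem dpp_comparison_uniqueness_general {n : ℕ} (hn : 0 < n) (Ω : Set (EuclideanSpace ℝ (Fin n)))
    (hΩb : Bornology.IsBounded Ω)
    (ε α β : ℝ) (hε : 0 < ε) (hα : 0 ≤ α) (hβ : 0 < β) (hαβ : α + β = 1)
    (u u' g g' : EuclideanSpace ℝ (Fin n) → ℝ)
    (hu : Measurable u) (hu' : Measurable u')
    (Cu : ℝ) (hub : ∀ x, |u x| ≤ Cu) (Cu' : ℝ) (hu'b : ∀ x, |u' x| ≤ Cu')
    (hudpp : ∀ x ∈ Ω, u x =
      α / 2 * sSup (u '' ball x ε) + α / 2 * sInf (u '' ball x ε) +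
        β * ⨍ y in ball x ε, u y)
    (hu'dpp : ∀ x ∈ Ω, u' x =
      α / 2 * sSup (u' '' ball x ε) + α / 2 * sInf (u' '' ball x ε) +
        β * ⨍ y in ball x ε, u' y)
    (hbg : ∀ x ∈ bdryStrip Ω ε, u x = g x)
    (hbg' : ∀ x ∈ bdryStrip Ω ε, u' x = g' x) :
    (sSup ((fun x => |u' x - u x|) '' Ω) ≤
      sSup ((fun x => |g' x - g x|) '' bdryStrip Ω ε)) ∧
    ((∀ x ∈ bdryStrip Ω ε, g' x = g x) →
      ∀ x ∈ Ω ∪ bdryStrip Ω ε, u' x = u x) := by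
  have : NeZero n := ⟨hn.ne'⟩
  set K := sSup ((fun x => |g' x - g x|) '' bdryStrip Ω ε)
  have hgK : ∀ x ∈ bdryStrip Ω ε, |g' x - g x| ≤ K := fun x hx =>
    le_csSup ⟨Cu' + Cu, by
      rintro _ ⟨y, hy, rfl⟩
      show |g' y - g y| ≤ _
      rw [← hbg y hy, ← hbg' y hy]
      exact (abs_sub _ _).trans (add_le_add (hu'b y) (hub y))⟩ (mem_image_of_mem _ hx)
  have huK : ∀ x ∈ Ω, |u' x - u x| ≤ K := fun x hx => by
    have hbdd := isBounded_union_bdryStrip ε hΩb ⟨x, hx⟩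
    refine abs_sub_le_iff.2 ⟨?_, ?_⟩
    · refine SatisfiesDPP.sub_le_of_forall_sub_le hudpp hu'dpp hα hβ hαβ hε hu hub hu' hu'b
        (fun _ => ball_subset_union_bdryStrip) hbdd (fun y hy => ?_) hx
      rw [hbg y hy, hbg' y hy]
      exact (le_abs_self _).trans (hgK y hy)
    · refine SatisfiesDPP.sub_le_of_forall_sub_le hu'dpp hudpp hα hβ hαβ hε hu' hu'b hu hub
        (fun _ => ball_subset_union_bdryStrip) hbdd (fun y hy => ?_) hx
      rw [hbg y hy, hbg' y hy]
      exact (le_abs_self _).trans ((abs_sub_comm _ _).trans_le (hgK y hy))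
  refine ⟨Real.sSup_le (by rintro _ ⟨x, hx, rfl⟩; exact huK x hx)
    (Real.sSup_nonneg (by rintro _ ⟨x, -, rfl⟩; exact abs_nonneg _)), fun hgg x hx => ?_⟩
  have hK : K ≤ 0 := Real.sSup_nonpos (by rintro _ ⟨y, hy, rfl⟩; simp [hgg y hy])
  rcases hx with hx | hx
  · exact sub_eq_zero.1 (abs_nonpos_iff.1 ((huK x hx).trans hK))
  · rw [hbg' x hx, hbg x hx, hgg x hx]

/-- Comparison with boundary data: `sup_Ω |u' − u| ≤ sup_{Γ_ε} |g' − g|`.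
In particular the solution of the DPP with given boundary data is unique. -/
theorem dpp_comparison_uniqueness {n : ℕ} (hn : 0 < n) (Ω : Set (EuclideanSpace ℝ (Fin n)))
    (hΩo : IsOpen Ω) (hΩc : IsConnected Ω) (hΩb : Bornology.IsBounded Ω)
    (ε α β : ℝ) (hε : 0 < ε) (hα : 0 ≤ α) (hβ : 0 < β) (hαβ : α + β = 1)
    (u u' g g' : EuclideanSpace ℝ (Fin n) → ℝ)
    (hu : Measurable u) (hu' : Measurable u')
    (Cu : ℝ) (hub : ∀ x, |u x| ≤ Cu) (Cu' : ℝ) (hu'b : ∀ x, |u' x| ≤ Cu')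
    (hudpp : ∀ x ∈ Ω, u x =
      α / 2 * sSup (u '' ball x ε) + α / 2 * sInf (u '' ball x ε) +
        β * ⨍ y in ball x ε, u y)
    (hu'dpp : ∀ x ∈ Ω, u' x =
      α / 2 * sSup (u' '' ball x ε) + α / 2 * sInf (u' '' ball x ε) +
        β * ⨍ y in ball x ε, u' y)
    (hbg : ∀ x ∈ bdryStrip Ω ε, u x = g x)
    (hbg' : ∀ x ∈ bdryStrip Ω ε, u' x = g' x) :
    (sSup ((fun x => |u' x - u x|) '' Ω) ≤
      sSup ((fun x => |g' x - g x|) '' bdryStrip Ω ε)) ∧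
    ((∀ x ∈ bdryStrip Ω ε, g' x = g x) →
      ∀ x ∈ Ω ∪ bdryStrip Ω ε, u' x = u x) :=
  dpp_comparison_uniqueness_general hn Ω hΩb ε α β hε hα hβ hαβ u u' g g' hu hu' Cu hub Cu' hu'b
    hudpp hu'dpp hbg hbg'
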